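/- Let R be a commutative ring and M a finitely generated free R-module of rank n, so R[M] ≅ R[x_1,...,x_n]. For each R-domain D and element x ∈ D ⊗ M, the set q_x := {f ∈ R[M] : f_D(x) = 0} is a prime ideal of R[M], and every prime ideal of R[M] arises this way. Moreover, for any subset S ⊆ R[M], the ideal of the closed subset V(S) of 𝔸_M equals the radical of the ideal generated by S, and the map sending a closed subset of 𝔸_M to the corresponding closed subset of Spec(R[M]) is a bijection. -/
import Mathlib


open scoped TensorProduct

universe u

/-- A polynomial law `M → N` over `R`: a family of maps `A ⊗[R] M → A ⊗[R] N`, one for every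
commutative `R`-algebra `A`, commuting with base change along all `R`-algebra homomorphisms. -/
structure PolyLaw (R : Type u) [CommRing R] (M N : Type u)
    [AddCommGroup M] [Module R M] [AddCommGroup N] [Module R N] : Type (u + 1) where
  toFun : ∀ (A : Type u) [CommRing A] [Algebra R A], A ⊗[R] M → A ⊗[R] N
  isCompat : ∀ {A B : Type u} [CommRing A] [Algebra R A] [CommRing B] [Algebra R B]
      (φ : A →ₐ[R] B) (x : A ⊗[R] M),
      LinearMap.rTensor N φ.toLinearMap (toFun A x) = toFun B (LinearMap.rTensor M φ.toLinearMap x)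

namespace PolyLaw

variable {R : Type u} [CommRing R] {M N P : Type u}
  [AddCommGroup M] [Module R M] [AddCommGroup N] [Module R N] [AddCommGroup P] [Module R P]

theorem ext' {f g : PolyLaw R M N}
    (h : ∀ (A : Type u) [CommRing A] [Algebra R A] (x : A ⊗[R] M), f.toFun A x = g.toFun A x) :
    f = g := by
  cases f; cases g
  simp only [mk.injEq]
  funext A instA instB x
  exact h A x

/-- A polynomial law is homogeneous of degree `d` if `φ_A (a • m) = a ^ d • φ_A m` always. -/
def IsHomogeneous (f : PolyLaw R M N) (d : ℕ) : Prop :=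
  ∀ (A : Type u) [CommRing A] [Algebra R A] (a : A) (x : A ⊗[R] M),
    f.toFun A (a • x) = a ^ d • f.toFun A x

/-- The polynomial law induced by a linear map. -/
noncomputable def ofLinear (ψ : M →ₗ[R] N) : PolyLaw R M N where
  toFun A _ _ := LinearMap.lTensor A ψ
  isCompat φ x := by
    show LinearMap.rTensor N φ.toLinearMap (LinearMap.lTensor _ ψ x)
      = LinearMap.lTensor _ ψ (LinearMap.rTensor M φ.toLinearMap x)
    rw [← LinearMap.comp_apply, ← LinearMap.comp_apply,
      LinearMap.rTensor_comp_lTensor, LinearMap.lTensor_comp_rTensor]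

/-- Composition of polynomial laws. -/
def comp (g : PolyLaw R N P) (f : PolyLaw R M N) : PolyLaw R M P where
  toFun A _ _ x := g.toFun A (f.toFun A x)
  isCompat φ x := by rw [g.isCompat φ, f.isCompat φ]

/-- Translation by an element `u : N`, as a polynomial law `N → N`. -/
noncomputable def translation (u : N) : PolyLaw R N N where
  toFun A _ _ x := x + (1 : A) ⊗ₜ[R] u
  isCompat φ x := by
    simp [map_add, LinearMap.rTensor_tmul, map_one]

end PolyLaw

namespace PolyLaw

variable {R : Type u} [CommRing R] {M N : Type u}
  [AddCommGroup M] [Module R M] [AddCommGroup N] [Module R N]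

noncomputable instance : Zero (PolyLaw R M N) :=
  ⟨{ toFun := fun A _ _ _ => 0, isCompat := fun φ x => by simp }⟩

noncomputable instance : Add (PolyLaw R M N) :=
  ⟨fun f g =>
    { toFun := fun A _ _ x => f.toFun A x + g.toFun A x
      isCompat := fun φ x => by simp [map_add, f.isCompat, g.isCompat] }⟩

noncomputable instance : Neg (PolyLaw R M N) :=
  ⟨fun f =>
    { toFun := fun A _ _ x => - f.toFun A x
      isCompat := fun φ x => by simp [map_neg, f.isCompat] }⟩

noncomputable instance : SMul R (PolyLaw R M N) :=
  ⟨fun r f =>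
    { toFun := fun A _ _ x => r • f.toFun A x
      isCompat := fun φ x => by simp [map_smul, f.isCompat] }⟩

@[simp] lemma zero_toFun (A : Type u) [CommRing A] [Algebra R A] (x : A ⊗[R] M) :
    (0 : PolyLaw R M N).toFun A x = 0 := rfl

@[simp] lemma add_toFun (f g : PolyLaw R M N) (A : Type u) [CommRing A] [Algebra R A]
    (x : A ⊗[R] M) : (f + g).toFun A x = f.toFun A x + g.toFun A x := rfl

@[simp] lemma neg_toFun (f : PolyLaw R M N) (A : Type u) [CommRing A] [Algebra R A]
    (x : A ⊗[R] M) : (-f).toFun A x = - f.toFun A x := rfl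

@[simp] lemma smul_toFun (r : R) (f : PolyLaw R M N) (A : Type u) [CommRing A] [Algebra R A]
    (x : A ⊗[R] M) : (r • f).toFun A x = r • f.toFun A x := rfl

noncomputable instance : AddCommGroup (PolyLaw R M N) where
  add_assoc a b c := ext' (by intros; simp [add_assoc])
  zero_add a := ext' (by intros; simp)
  add_zero a := ext' (by intros; simp)
  add_comm a b := ext' (by intros; simp [add_comm])
  neg_add_cancel a := ext' (by intros; simp)
  nsmul := nsmulRec
  zsmul := zsmulRec

noncomputable instance : Module R (PolyLaw R M N) where
  one_smul f := ext' (by intros; simp)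
  mul_smul r s f := ext' (by intros; simp [mul_smul])
  smul_zero r := ext' (by intros; simp)
  smul_add r f g := ext' (by intros; simp)
  add_smul r s f := ext' (by intros; simp [add_smul])
  zero_smul f := ext' (by intros; simp)

lemma rTensor_eq_algMap {A B : Type u} [CommRing A] [Algebra R A] [CommRing B] [Algebra R B]
    (φ : A →ₐ[R] B) (x : A ⊗[R] R) :
    LinearMap.rTensor R φ.toLinearMap x = Algebra.TensorProduct.map φ (AlgHom.id R R) x := by
  induction x using TensorProduct.induction_on with
  | zero => simp
  | tmul a r => simp
  | add x y hx hy => simp [map_add, hx, hy]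

noncomputable instance : One (PolyLaw R M R) :=
  ⟨{ toFun := fun A _ _ _ => 1
     isCompat := fun φ x => by rw [rTensor_eq_algMap, map_one] }⟩

noncomputable instance : Mul (PolyLaw R M R) :=
  ⟨fun f g =>
    { toFun := fun A _ _ x => f.toFun A x * g.toFun A x
      isCompat := fun φ x => by
        rw [rTensor_eq_algMap, map_mul, ← rTensor_eq_algMap, ← rTensor_eq_algMap,
          f.isCompat, g.isCompat] }⟩

@[simp] lemma one_toFun (A : Type u) [CommRing A] [Algebra R A] (x : A ⊗[R] M) :
    (1 : PolyLaw R M R).toFun A x = 1 := rfl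

@[simp] lemma mul_toFun (f g : PolyLaw R M R) (A : Type u) [CommRing A] [Algebra R A]
    (x : A ⊗[R] M) : (f * g).toFun A x = f.toFun A x * g.toFun A x := rfl

noncomputable instance : CommRing (PolyLaw R M R) :=
  { (inferInstance : AddCommGroup (PolyLaw R M R)) with
    mul := (· * ·)
    one := 1
    mul_assoc := fun a b c => ext' (by intros; simp [mul_assoc])
    one_mul := fun a => ext' (by intros; simp)
    mul_one := fun a => ext' (by intros; simp)
    left_distrib := fun a b c => ext' (by intros; simp [mul_add])
    right_distrib := fun a b c => ext' (by intros; simp [add_mul])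
    mul_comm := fun a b => ext' (by intros; simp [mul_comm])
    zero_mul := fun a => ext' (by intros; simp)
    mul_zero := fun a => ext' (by intros; simp) }

noncomputable instance : Algebra R (PolyLaw R M R) :=
  Algebra.ofModule (fun r x y => ext' (by intros; simp [smul_mul_assoc]))
    (fun r x y => ext' (by intros; simp [mul_smul_comm]))

end PolyLaw

open PolyLaw

section

variable (R : Type u) [CommRing R] (n : ℕ)

/-- A "subset of `𝔸_M`": a rule assigning to every `R`-domain `D` a subset of `D ⊗ M`. -/
def AffRule : Type (u + 1) :=
  ∀ (D : Type u) [CommRing D] [IsDomain D] [Algebra R D], Set (D ⊗[R] (Fin n → R))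

/-- The closed subset of `𝔸_M` cut out by a set `S` of polynomial laws `M → R`. -/
def vSet (S : Set (PolyLaw R (Fin n → R) R)) : AffRule R n :=
  fun D _ _ _ => {m | ∀ f ∈ S, f.toFun D m = 0}

/-- The ideal (as a set) of a rule `X`: all polynomial laws vanishing on all points of `X`. -/
def idealOfRule (X : AffRule R n) : Set (PolyLaw R (Fin n → R) R) :=
  {f | ∀ (D : Type u) [CommRing D] [IsDomain D] [Algebra R D], ∀ x ∈ X D, f.toFun D x = 0}

/-- The `i`-th coordinate function, as a polynomial law `(Fin n → R) → R`. -/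
noncomputable def coordLaw (i : Fin n) : PolyLaw R (Fin n → R) R :=
  ofLinear (LinearMap.proj i)

/-- The point of `A ⊗ (Fin n → R)` with coordinates `a : Fin n → A`. -/
noncomputable def xi (A : Type u) [CommRing A] [Algebra R A] (a : Fin n → A) :
    A ⊗[R] (Fin n → R) :=
  ∑ i, a i ⊗ₜ[R] Pi.single i 1

lemma xi_surjective (A : Type u) [CommRing A] [Algebra R A] (x : A ⊗[R] (Fin n → R)) :
    ∃ a : Fin n → A, x = xi R n A a := by
  induction x using TensorProduct.induction_on with
  | zero => exact ⟨0, by simp [xi]⟩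
  | tmul d m =>
    refine ⟨fun i => m i • d, ?_⟩
    have hm : m = ∑ i, m i • (Pi.single i (1 : R) : Fin n → R) := by
      ext j
      simp [Pi.single_apply, Finset.sum_ite_eq']
    rw [xi]
    conv_lhs => rw [hm]
    rw [TensorProduct.tmul_sum]
    refine Finset.sum_congr rfl fun i _ => ?_
    rw [TensorProduct.tmul_smul, TensorProduct.smul_tmul']
  | add x y hx hy =>
    obtain ⟨a, rfl⟩ := hx
    obtain ⟨b, rfl⟩ := hy
    exact ⟨a + b, by simp [xi, TensorProduct.add_tmul, Finset.sum_add_distrib]⟩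

lemma rTensor_xi {A B : Type u} [CommRing A] [Algebra R A] [CommRing B] [Algebra R B]
    (φ : A →ₐ[R] B) (a : Fin n → A) :
    LinearMap.rTensor (Fin n → R) φ.toLinearMap (xi R n A a) = xi R n B (fun i => φ (a i)) := by
  simp [xi, map_sum]

lemma rid_rTensor {A B : Type u} [CommRing A] [Algebra R A] [CommRing B] [Algebra R B]
    (φ : A →ₐ[R] B) (y : A ⊗[R] R) :
    Algebra.TensorProduct.rid R R B (LinearMap.rTensor R φ.toLinearMap y)
      = φ (Algebra.TensorProduct.rid R R A y) := by
  induction y using TensorProduct.induction_on with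
  | zero => simp
  | tmul a r => simp [Algebra.TensorProduct.rid_tmul]
  | add x y hx hy => simp [map_add, hx, hy]

/-- The algebra homomorphism from polynomial laws to multivariate polynomials, obtained by
evaluating at the generic point. -/
noncomputable def toMv : PolyLaw R (Fin n → R) R →ₐ[R] MvPolynomial (Fin n) R where
  toFun f := Algebra.TensorProduct.rid R R (MvPolynomial (Fin n) R)
    (f.toFun (MvPolynomial (Fin n) R) (xi R n (MvPolynomial (Fin n) R) MvPolynomial.X))
  map_one' := by simp
  map_mul' f g := by simp
  map_zero' := by simp
  map_add' f g := by simp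
  commutes' r := by
    rw [Algebra.algebraMap_eq_smul_one (A := PolyLaw R (Fin n → R) R),
      Algebra.algebraMap_eq_smul_one (A := MvPolynomial (Fin n) R)]
    simp

lemma rid_toFun_xi (f : PolyLaw R (Fin n → R) R) (A : Type u) [CommRing A] [Algebra R A]
    (a : Fin n → A) :
    Algebra.TensorProduct.rid R R A (f.toFun A (xi R n A a))
      = MvPolynomial.aeval a (toMv R n f) := by
  have h := f.isCompat (MvPolynomial.aeval a) (xi R n (MvPolynomial (Fin n) R) MvPolynomial.X)
  rw [rTensor_xi] at h
  have hx : (fun i => MvPolynomial.aeval (R := R) a (MvPolynomial.X i)) = a := by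
    funext i; simp
  rw [hx] at h
  rw [← h, rid_rTensor]
  rfl

lemma toFun_xi_eq_zero_iff (f : PolyLaw R (Fin n → R) R) (A : Type u) [CommRing A] [Algebra R A]
    (a : Fin n → A) :
    f.toFun A (xi R n A a) = 0 ↔ MvPolynomial.aeval a (toMv R n f) = 0 := by
  rw [← rid_toFun_xi]
  exact (EmbeddingLike.map_eq_zero_iff).symm

lemma coordLaw_toFun (A : Type u) [CommRing A] [Algebra R A] (a : Fin n → A) (i : Fin n) :
    (coordLaw R n i).toFun A (xi R n A a) = a i ⊗ₜ[R] (1 : R) := by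
  show LinearMap.lTensor A (LinearMap.proj i) (xi R n A a) = a i ⊗ₜ[R] (1 : R)
  rw [xi, map_sum]
  have h : ∀ j : Fin n, LinearMap.lTensor A (LinearMap.proj (R := R) (φ := fun _ => R) i)
      (a j ⊗ₜ[R] (Pi.single j (1 : R) : Fin n → R))
      = if i = j then a i ⊗ₜ[R] (1 : R) else 0 := by
    intro j
    rw [LinearMap.lTensor_tmul]
    simp only [LinearMap.proj_apply, Pi.single_apply]
    split
    · rename_i hij; subst hij; simp
    · simp
  simp_rw [h]
  simp

lemma toMv_coordLaw (i : Fin n) : toMv R n (coordLaw R n i) = MvPolynomial.X i := by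
  have h : toMv R n (coordLaw R n i) = Algebra.TensorProduct.rid R R (MvPolynomial (Fin n) R)
      ((coordLaw R n i).toFun (MvPolynomial (Fin n) R)
        (xi R n (MvPolynomial (Fin n) R) MvPolynomial.X)) := rfl
  rw [h, coordLaw_toFun, Algebra.TensorProduct.rid_tmul, one_smul]

lemma toMv_injective : Function.Injective (toMv R n) := by
  intro f g h
  apply ext'
  intro A _ _ x
  obtain ⟨a, rfl⟩ := xi_surjective R n A x
  apply (Algebra.TensorProduct.rid R R A).injective
  rw [rid_toFun_xi, rid_toFun_xi, h]

lemma toMv_surjective : Function.Surjective (toMv R n) := by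
  intro p
  refine ⟨MvPolynomial.aeval (coordLaw R n) p, ?_⟩
  have hcomp : (toMv R n).comp (MvPolynomial.aeval (coordLaw R n))
      = MvPolynomial.aeval MvPolynomial.X := by
    rw [MvPolynomial.comp_aeval]
    congr 1
    funext i
    exact toMv_coordLaw R n i
  calc toMv R n (MvPolynomial.aeval (coordLaw R n) p)
      = ((toMv R n).comp (MvPolynomial.aeval (coordLaw R n))) p := rfl
    _ = MvPolynomial.aeval MvPolynomial.X p := by rw [hcomp]
    _ = p := MvPolynomial.aeval_X_left_apply p

/-- The algebra isomorphism between polynomial laws `(Fin n → R) → R` and multivariate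
polynomials in `n` variables. -/
noncomputable def equivMv : PolyLaw R (Fin n → R) R ≃ₐ[R] MvPolynomial (Fin n) R :=
  AlgEquiv.ofBijective (toMv R n) ⟨toMv_injective R n, toMv_surjective R n⟩

@[simp] lemma equivMv_apply (f : PolyLaw R (Fin n → R) R) : equivMv R n f = toMv R n f := rfl

/-- For `M` free of rank `n` over `R` (so that `R[M] ≅ R[x_1,...,x_n]`):  for every `R`-domain
`D` and `x ∈ D ⊗ M` the set `q_x = {f ∈ R[M] : f_D(x) = 0}` is a prime ideal of `R[M]`, and every
prime ideal of `R[M]` arises this way; the ideal of the closed subset `V(S)` of `𝔸_M` is the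
radical of the ideal generated by `S`; and `X ↦ zeroLocus(I_X)` is a bijection from the closed
subsets of `𝔸_M` onto the closed subsets of `Spec R[M]`. -/
theorem free_module_closed_subsets_correspondence :
    (∀ (D : Type u) [CommRing D] [IsDomain D] [Algebra R D] (x : D ⊗[R] (Fin n → R)),
      ∃ p : Ideal (PolyLaw R (Fin n → R) R), p.IsPrime ∧
        (p : Set (PolyLaw R (Fin n → R) R)) = {f | f.toFun D x = 0}) ∧
    (∀ p : Ideal (PolyLaw R (Fin n → R) R), p.IsPrime →
      ∃ (D : Type u) (_ : CommRing D), ∃ (_ : IsDomain D) (_ : Algebra R D),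
        ∃ x : D ⊗[R] (Fin n → R),
          (p : Set (PolyLaw R (Fin n → R) R)) = {f | f.toFun D x = 0}) ∧
    (∀ S : Set (PolyLaw R (Fin n → R) R),
      idealOfRule R n (vSet R n S) = ((Ideal.span S).radical : Set (PolyLaw R (Fin n → R) R))) ∧
    Set.BijOn
      (fun X : AffRule R n => PrimeSpectrum.zeroLocus (idealOfRule R n X))
      {X : AffRule R n | ∃ S, X = vSet R n S}
      {C : Set (PrimeSpectrum (PolyLaw R (Fin n → R) R)) | IsClosed C} := by
  -- Part 1
  have h1 : ∀ (D : Type u) [CommRing D] [IsDomain D] [Algebra R D] (x : D ⊗[R] (Fin n → R)),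
      ∃ p : Ideal (PolyLaw R (Fin n → R) R), p.IsPrime ∧
        (p : Set (PolyLaw R (Fin n → R) R)) = {f | f.toFun D x = 0} := by
    intro D _ _ _ x
    obtain ⟨a, rfl⟩ := xi_surjective R n D x
    refine ⟨RingHom.ker
      (((MvPolynomial.aeval a).comp (toMv R n) : PolyLaw R (Fin n → R) R →ₐ[R] D) :
        PolyLaw R (Fin n → R) R →+* D), RingHom.ker_isPrime _, ?_⟩
    ext f
    simp only [SetLike.mem_coe, RingHom.mem_ker, RingHom.coe_coe, AlgHom.coe_comp,
      Function.comp_apply, Set.mem_setOf_eq]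
    exact (toFun_xi_eq_zero_iff R n f D a).symm
  -- Part 2
  have h2 : ∀ p : Ideal (PolyLaw R (Fin n → R) R), p.IsPrime →
      ∃ (D : Type u) (_ : CommRing D), ∃ (_ : IsDomain D) (_ : Algebra R D),
        ∃ x : D ⊗[R] (Fin n → R),
          (p : Set (PolyLaw R (Fin n → R) R)) = {f | f.toFun D x = 0} := by
    intro p hp
    haveI := hp
    set p' : Ideal (MvPolynomial (Fin n) R) := Ideal.comap (equivMv R n).symm p with hp'def
    haveI hp' : p'.IsPrime := Ideal.IsPrime.comap _
    letI D := MvPolynomial (Fin n) R ⧸ p'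
    haveI : IsDomain D := Ideal.Quotient.isDomain p'
    refine ⟨D, inferInstance, inferInstance, inferInstance,
      xi R n D (fun i => Ideal.Quotient.mk p' (MvPolynomial.X i)), ?_⟩
    have key : MvPolynomial.aeval (R := R) (fun i => Ideal.Quotient.mk p' (MvPolynomial.X i))
        = Ideal.Quotient.mkₐ R p' := by
      rw [MvPolynomial.aeval_unique (Ideal.Quotient.mkₐ R p')]
      rfl
    ext f
    simp only [SetLike.mem_coe, Set.mem_setOf_eq]
    rw [toFun_xi_eq_zero_iff R n f D, key]
    show f ∈ p ↔ Ideal.Quotient.mk p' (toMv R n f) = 0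
    rw [Ideal.Quotient.eq_zero_iff_mem, hp'def, Ideal.mem_comap]
    have hff : (equivMv R n).symm (toMv R n f) = f := (equivMv R n).symm_apply_apply f
    rw [hff]
  -- Part 3
  have h3 : ∀ S : Set (PolyLaw R (Fin n → R) R),
      idealOfRule R n (vSet R n S) = ((Ideal.span S).radical : Set (PolyLaw R (Fin n → R) R)) := by
    intro S
    ext f
    simp only [SetLike.mem_coe]
    constructor
    · intro hf
      rw [Ideal.radical_eq_sInf, Submodule.mem_sInf]
      rintro p ⟨hSp, hp⟩
      obtain ⟨D, iD, iDom, iAlg, x, hx⟩ := h2 p hp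
      have hxV : x ∈ vSet R n S D := by
        intro g hg
        have hgp : g ∈ p := hSp (Ideal.subset_span hg)
        have : g ∈ (p : Set (PolyLaw R (Fin n → R) R)) := hgp
        rw [hx] at this
        exact this
      have hfx : f.toFun D x = 0 := hf D x hxV
      have : f ∈ (p : Set (PolyLaw R (Fin n → R) R)) := by rw [hx]; exact hfx
      exact this
    · intro hf D _ _ _ x hx
      obtain ⟨p, hp, hpx⟩ := h1 D x
      have hSp : Ideal.span S ≤ p := Ideal.span_le.mpr fun g hg => by
        have : g ∈ (p : Set (PolyLaw R (Fin n → R) R)) := by rw [hpx]; exact hx g hg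
        exact this
      have hfp : f ∈ p := (hp.radical_le_iff.mpr hSp) hf
      have : f ∈ (p : Set (PolyLaw R (Fin n → R) R)) := hfp
      rw [hpx] at this
      exact this
  -- vSet of a set equals vSet of the radical of its span
  have hvrad : ∀ S : Set (PolyLaw R (Fin n → R) R),
      vSet R n S = vSet R n ((Ideal.span S).radical : Set (PolyLaw R (Fin n → R) R)) := by
    intro S
    refine funext fun D => funext fun iD => funext fun iDom => funext fun iAlg => ?_
    ext x
    constructor
    · intro hx g hg
      obtain ⟨p, hp, hpx⟩ := h1 D x
      have hSp : Ideal.span S ≤ p := Ideal.span_le.mpr fun h hh => by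
        have : h ∈ (p : Set (PolyLaw R (Fin n → R) R)) := by rw [hpx]; exact hx h hh
        exact this
      have hg' : g ∈ (Ideal.span S).radical := hg
      have : g ∈ (p : Set (PolyLaw R (Fin n → R) R)) := hp.radical_le_iff.mpr hSp hg'
      rw [hpx] at this
      exact this
    · intro hx g hg
      exact hx g (Ideal.le_radical (Ideal.subset_span hg))
  refine ⟨h1, h2, h3, ?_, ?_, ?_⟩
  · -- MapsTo
    intro X _
    exact PrimeSpectrum.isClosed_zeroLocus _
  · -- InjOn
    rintro X ⟨S, rfl⟩ X' ⟨S', rfl⟩ h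
    simp only at h
    rw [h3 S, h3 S'] at h
    have hrad : (Ideal.span S).radical = (Ideal.span S').radical := by
      have := congrArg PrimeSpectrum.vanishingIdeal h
      rwa [PrimeSpectrum.vanishingIdeal_zeroLocus_eq_radical,
        PrimeSpectrum.vanishingIdeal_zeroLocus_eq_radical, Ideal.radical_idem,
        Ideal.radical_idem] at this
    rw [hvrad S, hvrad S', hrad]
  · -- SurjOn
    intro C hC
    rw [Set.mem_setOf_eq, PrimeSpectrum.isClosed_iff_zeroLocus] at hC
    obtain ⟨S', rfl⟩ := hC
    refine ⟨vSet R n S', ⟨S', rfl⟩, ?_⟩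
    show PrimeSpectrum.zeroLocus (idealOfRule R n (vSet R n S')) = PrimeSpectrum.zeroLocus S'
    rw [h3, PrimeSpectrum.zeroLocus_radical, PrimeSpectrum.zeroLocus_span]

end
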